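/- arXiv:1504.07326 — 2 statements merged into one kernel-verified Lean document; each statement's English description precedes it below -/
import Mathlib

section
/- For every r ∈ ℝ, the sum over all integers j of (r − j)·φ(r − j) equals 0 (the sum has only finitely many nonzero terms since φ vanishes outside [−2, 2]). This is the one-dimensional first-moment condition underlying the discrete delta function. -/
/-!
Since `φ` vanishes outside `[-2, 2]`, only the four integers nearest to `r` contribute, and
after the shift `s = fract r ∈ [0, 1)` the points are `s + 1, s, s - 1, s - 2`. At all four the
kernel is `(a ± √(1 + 4s - 4s²)) / 8` with `a` affine in `s`, so the weighted sum is a polynomial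
identity in `s` and the square root.
-/

/-- The Peskin four-point kernel. -/
noncomputable def peskinPhi (r : ℝ) : ℝ :=
  if |r| ≤ 1 then (3 - 2 * |r| + Real.sqrt (1 + 4 * |r| - 4 * |r| ^ 2)) / 8
  else if |r| ≤ 2 then (5 - 2 * |r| - Real.sqrt (-7 + 12 * |r| - 4 * |r| ^ 2)) / 8
  else 0

theorem tsum_comp_sub_int_eq_of_abs_ge_two {M : Type*} [AddCommMonoid M] [TopologicalSpace M]
    (f : ℝ → M) (hf : ∀ x, 2 ≤ |x| → f x = 0) (r : ℝ) :
    ∑' j : ℤ, f (r - j) =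
      f (Int.fract r + 1) + f (Int.fract r) + f (Int.fract r - 1) + f (Int.fract r - 2) := by
  have hfract : ∀ k : ℤ, r - ↑(⌊r⌋ + k) = Int.fract r - k := fun k => by
    rw [Int.fract]; push_cast; ring
  rw [← (Equiv.addLeft ⌊r⌋).tsum_eq]
  simp only [Equiv.coe_addLeft, hfract]
  rw [tsum_eq_sum (s := {-1, 0, 1, 2})]
  · simp [Finset.sum_insert, add_assoc]
  · intro k hk
    simp only [Finset.mem_insert, Finset.mem_singleton] at hk
    apply hf
    have h0 := Int.fract_nonneg r
    have h1 := Int.fract_lt_one r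
    rcases (by omega : k ≤ -2 ∨ 3 ≤ k) with hk | hk
    · have : (k : ℝ) ≤ -2 := by exact_mod_cast hk
      rw [abs_of_nonneg (by linarith)]; linarith
    · have : (3 : ℝ) ≤ k := by exact_mod_cast hk
      rw [abs_of_nonpos (by linarith)]; linarith

theorem peskinPhi_of_abs_le_one {r : ℝ} (h : |r| ≤ 1) :
    peskinPhi r = (3 - 2 * |r| + √(1 + 4 * |r| - 4 * |r| ^ 2)) / 8 :=
  if_pos h

theorem peskinPhi_of_one_le_abs_of_abs_le_two {r : ℝ} (h₁ : 1 ≤ |r|) (h₂ : |r| ≤ 2) :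
    peskinPhi r = (5 - 2 * |r| - √(-7 + 12 * |r| - 4 * |r| ^ 2)) / 8 := by
  rcases h₁.eq_or_lt with h₁ | h₁
  · rw [peskinPhi_of_abs_le_one h₁.ge, ← h₁]
    norm_num
  · rw [peskinPhi, if_neg h₁.not_ge, if_pos h₂]

theorem peskinPhi_eq_zero_of_two_le_abs {r : ℝ} (h : 2 ≤ |r|) : peskinPhi r = 0 := by
  rcases h.eq_or_lt with h | h
  · rw [peskinPhi_of_one_le_abs_of_abs_le_two (by linarith) h.ge, ← h]
    norm_num
  · rw [peskinPhi, if_neg (by linarith), if_neg h.not_ge]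

theorem peskinPhi_firstMoment_of_mem_Icc {s : ℝ} (hs : s ∈ Set.Icc (0 : ℝ) 1) :
    (s + 1) * peskinPhi (s + 1) + s * peskinPhi s + (s - 1) * peskinPhi (s - 1)
      + (s - 2) * peskinPhi (s - 2) = 0 := by
  obtain ⟨h₀, h₁⟩ := hs
  set A := √(1 + 4 * s - 4 * s ^ 2)
  have hφ_add_one : peskinPhi (s + 1) = (3 - 2 * s - A) / 8 := by
    have habs : |s + 1| = s + 1 := abs_of_nonneg (by linarith)
    rw [peskinPhi_of_one_le_abs_of_abs_le_two (by linarith) (by linarith), habs,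
      show -7 + 12 * (s + 1) - 4 * (s + 1) ^ 2 = 1 + 4 * s - 4 * s ^ 2 by ring]
    ring
  have hφ : peskinPhi s = (3 - 2 * s + A) / 8 := by
    rw [peskinPhi_of_abs_le_one (by rwa [abs_of_nonneg h₀]), abs_of_nonneg h₀]
  have hφ_sub_one : peskinPhi (s - 1) = (1 + 2 * s + A) / 8 := by
    have habs : |s - 1| = 1 - s := by rw [abs_of_nonpos (by linarith)]; ring
    rw [peskinPhi_of_abs_le_one (by linarith), habs,
      show 1 + 4 * (1 - s) - 4 * (1 - s) ^ 2 = 1 + 4 * s - 4 * s ^ 2 by ring]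
    ring
  have hφ_sub_two : peskinPhi (s - 2) = (1 + 2 * s - A) / 8 := by
    have habs : |s - 2| = 2 - s := by rw [abs_of_nonpos (by linarith)]; ring
    rw [peskinPhi_of_one_le_abs_of_abs_le_two (by linarith) (by linarith), habs,
      show -7 + 12 * (2 - s) - 4 * (2 - s) ^ 2 = 1 + 4 * s - 4 * s ^ 2 by ring]
    ring
  rw [hφ_add_one, hφ, hφ_sub_one, hφ_sub_two]
  ring

/-- One-dimensional first-moment condition: for every `r ∈ ℝ`, the sum over all
integers `j` of `(r − j)·φ(r − j)` equals `0`. -/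
theorem peskinPhi_firstMoment (r : ℝ) :
    ∑' j : ℤ, (r - j) * peskinPhi (r - j) = 0 :=
  (tsum_comp_sub_int_eq_of_abs_ge_two (fun x ↦ x * peskinPhi x)
    (fun _ hx ↦ by rw [peskinPhi_eq_zero_of_two_le_abs hx, mul_zero]) r).trans
    (peskinPhi_firstMoment_of_mem_Icc ⟨Int.fract_nonneg r, (Int.fract_lt_one r).le⟩)
end

section
/- Approximate first-moment condition in the fine-grid limit: fix a radial parameter ω > 0 and a point X ∈ ℝ³. Then the vector-valued grid sums M(h) = Σ_{v ∈ ℤ³} (h·v − X)·δ̂(h·v − X, ω)·h³ converge to the zero vector of ℝ³ as h → 0⁺. -/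
/-!
Each component of the sum factorises: `M(h)ᵢ = ω⁻³ ∏ⱼ Lⱼ(h)` with one-dimensional Riemann sums
`Lⱼ(h) = h ∑ₖ fⱼ(h k - Xⱼ)`, where `fᵢ(x) = x φ(x/ω)` and `fⱼ(x) = φ(x/ω)` for `j ≠ i`. The
factors with `j ≠ i` stay bounded. The odd factor tends to `0`: the substitution `k ↦ m - k`
shows that its Riemann sum at the shift `a` is minus the one at the shift `h m - a`, and for
`m = ⌊2a/h⌋` these shifts differ by less than `h`. By uniform continuity of `fᵢ`, the difference
of the two sums, which has `O(1/h)` nonzero terms each of size `h · o(1)`, tends to `0`.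
-/

open Filter

/-- The smoothed Dirac delta function `δ̂(x, ω) = ω⁻³ φ(x₁/ω) φ(x₂/ω) φ(x₃/ω)`. -/
noncomputable def deltaHat (x : Fin 3 → ℝ) (ω : ℝ) : ℝ :=
  ω⁻¹ ^ 3 * (peskinPhi (x 0 / ω) * peskinPhi (x 1 / ω) * peskinPhi (x 2 / ω))

open Topology Asymptotics

lemma peskinPhi_neg (r : ℝ) : peskinPhi (-r) = peskinPhi r := by
  simp only [peskinPhi, abs_neg]

lemma peskinPhi_eq_zero_of_two_lt_abs {r : ℝ} (hr : 2 < |r|) : peskinPhi r = 0 := by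
  rw [peskinPhi, if_neg (by linarith), if_neg (by linarith)]

lemma continuous_peskinPhi : Continuous peskinPhi := by
  unfold peskinPhi
  refine Continuous.if_le (by fun_prop) (Continuous.if_le (by fun_prop) continuous_const
    continuous_abs continuous_const fun r hr => ?_) continuous_abs continuous_const fun r hr => ?_
  · rw [hr]; norm_num
  · rw [hr]; norm_num

lemma hasCompactSupport_peskinPhi_div {ω : ℝ} (hω : 0 < ω) :
    HasCompactSupport fun x => peskinPhi (x / ω) := by
  refine HasCompactSupport.intro (isCompact_closedBall 0 (2 * ω)) fun x hx => ?_
  apply peskinPhi_eq_zero_of_two_lt_abs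
  rw [Metric.mem_closedBall, dist_zero_right, Real.norm_eq_abs, not_le] at hx
  rwa [abs_div, abs_of_pos hω, lt_div_iff₀ hω]

lemma hasCompactSupport_mul_peskinPhi_div {ω : ℝ} (hω : 0 < ω) :
    HasCompactSupport fun x => x * peskinPhi (x / ω) :=
  (hasCompactSupport_peskinPhi_div hω).mul_left

lemma HasCompactSupport.exists_pos_le_abs {f : ℝ → ℝ} (hf : HasCompactSupport f) :
    ∃ R, 0 < R ∧ ∀ x, R ≤ |x| → f x = 0 := by
  simpa only [Real.norm_eq_abs] using hf.exists_pos_le_norm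

noncomputable def latticeSum (f : ℝ → ℝ) (h a : ℝ) : ℝ := ∑' k : ℤ, h * f (h * k - a)

noncomputable def latticeWindow (h a R : ℝ) : Finset ℤ := Finset.Icc ⌈(a - R) / h⌉ ⌊(a + R) / h⌋

section LatticeSum

variable {f : ℝ → ℝ} {h a R : ℝ}

lemma mem_latticeWindow (hh : 0 < h) {k : ℤ} : k ∈ latticeWindow h a R ↔ |h * k - a| ≤ R := by
  rw [latticeWindow, Finset.mem_Icc, Int.ceil_le, Int.le_floor, div_le_iff₀ hh, le_div_iff₀ hh,
    abs_sub_le_iff]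
  constructor <;> rintro ⟨h1, h2⟩ <;> constructor <;> linarith

lemma card_latticeWindow_mul_le (hh : 0 < h) (hR : 0 ≤ R) :
    ((latticeWindow h a R).card : ℝ) * h ≤ 2 * R + h := by
  have hceil := Int.le_ceil ((a - R) / h)
  have hfloor := Int.floor_le ((a + R) / h)
  have hcard : ((latticeWindow h a R).card : ℝ)
      ≤ max ((⌊(a + R) / h⌋ + 1 - ⌈(a - R) / h⌉ : ℤ) : ℝ) 0 := by
    rw [latticeWindow, Int.card_Icc]
    exact_mod_cast (Int.toNat_eq_max _).le
  have hdiff : (a + R) / h - (a - R) / h = 2 * R / h := by ring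
  calc ((latticeWindow h a R).card : ℝ) * h ≤ (2 * R / h + 1) * h := by
        gcongr
        refine hcard.trans (max_le ?_ (by positivity))
        push_cast
        linarith
    _ = 2 * R + h := by field_simp

lemma eq_zero_of_notMem_latticeWindow (hh : 0 < h) (hf : ∀ x, R ≤ |x| → f x = 0) {b R' : ℝ}
    (hR' : |a - b| + R ≤ R') {k : ℤ} (hk : k ∉ latticeWindow h a R') : f (h * k - b) = 0 := by
  rw [mem_latticeWindow hh, not_le] at hk
  have := abs_sub_le (h * k) b a
  rw [abs_sub_comm b a] at this
  exact hf _ (by linarith)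

lemma latticeSum_eq_sum_latticeWindow (hh : 0 < h) (hf : ∀ x, R ≤ |x| → f x = 0) {b R' : ℝ}
    (hR' : |a - b| + R ≤ R') :
    latticeSum f h b = ∑ k ∈ latticeWindow h a R', h * f (h * k - b) :=
  tsum_eq_sum fun _ hk => by rw [eq_zero_of_notMem_latticeWindow hh hf hR' hk, mul_zero]

lemma finite_support_latticeSum_summand (hf : HasCompactSupport f) (hh : 0 < h) :
    (Function.support fun k : ℤ => h * f (h * k - a)).Finite := by
  obtain ⟨R, -, hfR⟩ := hf.exists_pos_le_abs
  refine (latticeWindow h a R).finite_toSet.subset fun k hk => by_contra fun hk' => hk ?_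
  show h * f (h * k - a) = 0
  rw [eq_zero_of_notMem_latticeWindow (b := a) hh hfR (by simp) hk', mul_zero]

lemma abs_sum_latticeWindow_le (hh : 0 < h) (hR : 0 ≤ R) {F : ℤ → ℝ} {B : ℝ}
    (hB : ∀ k, |F k| ≤ B) : |∑ k ∈ latticeWindow h a R, h * F k| ≤ (2 * R + h) * B := by
  have hB0 : 0 ≤ B := (abs_nonneg _).trans (hB 0)
  calc |∑ k ∈ latticeWindow h a R, h * F k| ≤ ∑ _k ∈ latticeWindow h a R, h * B := by
        refine (Finset.abs_sum_le_sum_abs _ _).trans (Finset.sum_le_sum fun k _ => ?_)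
        rw [abs_mul, abs_of_pos hh]
        exact mul_le_mul_of_nonneg_left (hB k) hh.le
    _ = (latticeWindow h a R).card * h * B := by rw [Finset.sum_const, nsmul_eq_mul, mul_assoc]
    _ ≤ (2 * R + h) * B := by gcongr; exact card_latticeWindow_mul_le hh hR

lemma latticeSum_isBigO_one (hf : Continuous f) (hcs : HasCompactSupport f) (a : ℝ) :
    (fun h => latticeSum f h a) =O[𝓝[>] 0] fun _ => (1 : ℝ) := by
  obtain ⟨R, hR, hfR⟩ := hcs.exists_pos_le_abs
  obtain ⟨B, hB⟩ := hf.bounded_above_of_compact_support hcs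
  have hB0 : 0 ≤ B := (norm_nonneg _).trans (hB 0)
  refine IsBigO.of_bound ((2 * R + 1) * B) ?_
  filter_upwards [Ioo_mem_nhdsGT one_pos] with h ⟨hh, hh1⟩
  rw [latticeSum_eq_sum_latticeWindow (a := a) (b := a) (R' := R) hh hfR (by simp), norm_one,
    mul_one, Real.norm_eq_abs]
  calc _ ≤ (2 * R + h) * B := abs_sum_latticeWindow_le hh hR.le fun k => hB _
    _ ≤ (2 * R + 1) * B := by gcongr

lemma latticeSum_eq_neg_of_odd (hodd : ∀ x, f (-x) = -f x) (h a : ℝ) (m : ℤ) :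
    latticeSum f h a = -latticeSum f h (h * m - a) :=
  calc latticeSum f h a = ∑' k : ℤ, h * f (h * ↑(m - k) - a) :=
        ((Equiv.subLeft m).tsum_eq fun k : ℤ => h * f (h * k - a)).symm
    _ = ∑' k : ℤ, -(h * f (h * k - (h * m - a))) := tsum_congr fun k => by
        rw [Int.cast_sub, show h * (m - k) - a = -(h * k - (h * m - a)) by ring, hodd, mul_neg]
    _ = _ := tsum_neg

lemma two_mul_abs_latticeSum_le_of_odd (hh : 0 < h) (hR : 0 ≤ R)
    (hf : ∀ x, R ≤ |x| → f x = 0) (hodd : ∀ x, f (-x) = -f x) {η : ℝ}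
    (hη : ∀ x y, |x - y| < h → |f x - f y| ≤ η) :
    2 * |latticeSum f h a| ≤ (2 * R + 3 * h) * η := by
  -- `b` is the reflection of `a` through the largest point of `(h / 2) ℤ` below it
  set b := h * ⌊2 * a / h⌋ - a
  have hab : |a - b| < h := by
    have h1 := (le_div_iff₀ hh).1 (Int.floor_le (2 * a / h))
    have h2 := (div_lt_iff₀ hh).1 (Int.lt_floor_add_one (2 * a / h))
    rw [abs_lt]
    constructor <;> linarith
  have hsum : 2 * latticeSum f h a
      = ∑ k ∈ latticeWindow h a (R + h), h * (f (h * k - a) - f (h * k - b)) := by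
    rw [two_mul]
    nth_rewrite 2 [latticeSum_eq_neg_of_odd hodd h a ⌊2 * a / h⌋]
    rw [← sub_eq_add_neg,
      latticeSum_eq_sum_latticeWindow (a := a) (b := a) (R' := R + h) hh hf (by simp; linarith),
      latticeSum_eq_sum_latticeWindow (a := a) (b := b) (R' := R + h) hh hf (by linarith),
      ← Finset.sum_sub_distrib]
    simp_rw [mul_sub]
  calc 2 * |latticeSum f h a| = |2 * latticeSum f h a| := by rw [abs_mul, abs_two]
    _ ≤ (2 * (R + h) + h) * η := by
        rw [hsum]
        refine abs_sum_latticeWindow_le hh (by positivity) fun k => hη _ _ ?_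
        rwa [show h * k - a - (h * k - b) = b - a by ring, abs_sub_comm]
    _ = (2 * R + 3 * h) * η := by ring

theorem tendsto_latticeSum_of_odd (hf : Continuous f) (hcs : HasCompactSupport f)
    (hodd : ∀ x, f (-x) = -f x) (a : ℝ) :
    Tendsto (fun h => latticeSum f h a) (𝓝[>] 0) (𝓝 0) := by
  obtain ⟨R, hR, hfR⟩ := hcs.exists_pos_le_abs
  refine Metric.tendsto_nhds.2 fun ε hε => ?_
  obtain ⟨δ, hδ, hfδ⟩ := Metric.uniformContinuous_iff.1
    (hcs.uniformContinuous_of_continuous hf) (ε / (2 * R + 3)) (by positivity)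
  filter_upwards [Ioo_mem_nhdsGT (lt_min hδ one_pos)] with h ⟨hh, hhδ1⟩
  obtain ⟨hhδ, hh1⟩ := lt_min_iff.1 hhδ1
  have hη : ∀ x y, |x - y| < h → |f x - f y| ≤ ε / (2 * R + 3) := fun x y hxy => by
    simpa only [Real.dist_eq] using (hfδ (by rw [Real.dist_eq]; linarith)).le
  have hbound := two_mul_abs_latticeSum_le_of_odd (a := a) hh hR.le hfR hodd hη
  have hε' : (2 * R + 3 * h) * (ε / (2 * R + 3)) ≤ ε :=
    calc (2 * R + 3 * h) * (ε / (2 * R + 3)) ≤ (2 * R + 3) * (ε / (2 * R + 3)) := by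
          gcongr; linarith
      _ = ε := by field_simp
  rw [Real.dist_eq, sub_zero]
  linarith

end LatticeSum

lemma tendsto_prod_of_tendsto_zero_of_isBigO_one {ι α R : Type*} [Fintype ι] [DecidableEq ι]
    [SeminormedCommRing R] {l : Filter α} {u : ι → α → R} (i : ι) (hi : Tendsto (u i) l (𝓝 0))
    (hb : ∀ j ≠ i, u j =O[l] fun _ => (1 : ℝ)) :
    Tendsto (fun x => ∏ j, u j x) l (𝓝 0) := by
  have hrest : (fun x => ∏ j ∈ Finset.univ.erase i, u j x)
      =O[l] fun _ => ∏ _j ∈ Finset.univ.erase i, (1 : ℝ) :=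
    IsBigO.finsetProd fun j hj => hb j (Finset.ne_of_mem_erase hj)
  have := ((isLittleO_one_iff ℝ).2 hi).mul_isBigO hrest
  simp only [Finset.prod_const_one, one_mul] at this
  simp_rw [← Finset.mul_prod_erase Finset.univ _ (Finset.mem_univ i)]
  simpa using (isLittleO_one_iff ℝ).1 this

lemma hasSum_prod_of_finite_support {ι β R : Type*} [Fintype ι] [DecidableEq ι] [CommSemiring R]
    [TopologicalSpace R] {F : ι → β → R} (hF : ∀ j, (Function.support (F j)).Finite) :
    HasSum (fun v : ι → β => ∏ j, F j (v j)) (∏ j, ∑' k, F j k) := by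
  have hsum : ∀ j, ∑' k, F j k = ∑ k ∈ (hF j).toFinset, F j k := fun j =>
    tsum_eq_sum fun k hk => by simpa using hk
  simp_rw [hsum, Finset.prod_univ_sum]
  refine hasSum_sum_of_ne_finset_zero fun v hv => ?_
  obtain ⟨j, hj⟩ := not_forall.1 (mt Fintype.mem_piFinset.2 hv)
  exact Finset.prod_eq_zero (Finset.mem_univ j) (by simpa using hj)

noncomputable def firstMomentFactor (ω : ℝ) (i j : Fin 3) : ℝ → ℝ :=
  if j = i then fun x => x * peskinPhi (x / ω) else fun x => peskinPhi (x / ω)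

lemma hasCompactSupport_firstMomentFactor {ω : ℝ} (hω : 0 < ω) (i j : Fin 3) :
    HasCompactSupport (firstMomentFactor ω i j) := by
  unfold firstMomentFactor
  split_ifs
  · exact hasCompactSupport_mul_peskinPhi_div hω
  · exact hasCompactSupport_peskinPhi_div hω

lemma hasSum_deltaHat_firstMoment {ω : ℝ} (hω : 0 < ω) (X : Fin 3 → ℝ) {h : ℝ} (hh : 0 < h) :
    HasSum (fun v : Fin 3 → ℤ => (deltaHat (fun i => h * (v i : ℝ) - X i) ω * h ^ 3) •
        (fun i => h * (v i : ℝ) - X i : Fin 3 → ℝ))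
      (fun i => ω⁻¹ ^ 3 * ∏ j, latticeSum (firstMomentFactor ω i j) h (X j)) := by
  refine Pi.hasSum.2 fun i => ((hasSum_prod_of_finite_support fun j =>
    finite_support_latticeSum_summand (a := X j) (hasCompactSupport_firstMomentFactor hω i j)
      hh).mul_left (ω⁻¹ ^ 3)).congr_fun fun v => ?_
  fin_cases i <;> simp [deltaHat, firstMomentFactor, Fin.prod_univ_three] <;> ring

/-- Approximate first-moment condition in the fine-grid limit: for fixed `ω > 0` and
`X ∈ ℝ³`, the vector-valued grid sums
`M(h) = Σ_{v ∈ ℤ³} (h·v − X)·δ̂(h·v − X, ω)·h³` converge to the zero vector of `ℝ³`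
as `h → 0⁺`. -/
theorem deltaHat_firstMoment_limit (ω : ℝ) (hω : 0 < ω) (X : Fin 3 → ℝ) :
    Tendsto (fun h : ℝ =>
        ∑' v : Fin 3 → ℤ,
          (deltaHat (fun i => h * (v i : ℝ) - X i) ω * h ^ 3) •
            (fun i => h * (v i : ℝ) - X i : Fin 3 → ℝ))
      (nhdsWithin 0 (Set.Ioi 0)) (nhds 0) := by
  have hcont : Continuous fun x => peskinPhi (x / ω) :=
    continuous_peskinPhi.comp (continuous_id.div_const ω)
  refine (tendsto_pi_nhds.2 fun i => ?_).congr' (eventually_nhdsWithin_of_forall fun h hh =>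
    (hasSum_deltaHat_firstMoment hω X hh).tsum_eq.symm)
  have hmoment := tendsto_latticeSum_of_odd (f := fun x => x * peskinPhi (x / ω))
    (continuous_id.mul hcont) (hasCompactSupport_mul_peskinPhi_div hω) (fun x => by simp [neg_div, peskinPhi_neg]) (X i)
  have hmass := fun j => latticeSum_isBigO_one hcont (hasCompactSupport_peskinPhi_div hω) (X j)
  have hprod := tendsto_prod_of_tendsto_zero_of_isBigO_one
    (u := fun j h => latticeSum (firstMomentFactor ω i j) h (X j)) i
    (by simpa [firstMomentFactor] using hmoment)
    fun j hj => by simpa [firstMomentFactor, hj] using hmass j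
  simpa only [mul_zero, Pi.zero_apply] using hprod.const_mul (ω⁻¹ ^ 3)
end
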